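/- If in the SEP estimator each hypernode w is chosen from H(v) with probability P(w) = Cost(T_w) / Σ_{x ∈ H(v)} Cost(T_x) (assuming Cost(T_x) > 0 for all relevant hypernodes x so this is well defined), then C_SEP is a zero-variance estimator: with probability one, C_SEP(T_v) = Cost(T_v)/|v| for every hypernode v. (Paper's Theorem 2.) -/

import Mathlib

/-!
Each child of `v` lies in `C(|S(v)| - 1, |w| - 1)` hyperchildren `w ∈ H(v)`, so double counting
gives `Σ_{w ∈ H(v)} Cost(T_w) = C(|S(v)| - 1, |w| - 1) · Cost(T_{S(v)})`. Hence for
`P(w) ∝ Cost(T_w)` the importance weight turns an exact estimate `Cost(T_w) / |w|` of the drawn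
hyperchild into `c(v) / |v| + Cost(T_{S(v)}) / |v| = Cost(T_v) / |v|`, whichever `w` was drawn.
Induction from the leaves upwards shows that the estimator is deterministic.
-/

open Finset

/-- A finite rooted tree on a finite node type `V`.  The root is its own parent,
every non-root node has a parent whose depth is one smaller, and the root is the
unique node of depth `0`. -/
structure FinRootedTree (V : Type) [Fintype V] [DecidableEq V] where
  root : V
  parent : V → V
  depth : V → ℕ
  depth_root : depth root = 0
  parent_root : parent root = root
  depth_parent : ∀ v, v ≠ root → depth (parent v) + 1 = depth v
  eq_root_of_depth_zero : ∀ v, depth v = 0 → v = root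

namespace FinRootedTree

variable {V : Type} [Fintype V] [DecidableEq V]

/-- The set of children of a node. -/
def children (T : FinRootedTree V) (x : V) : Finset V :=
  Finset.univ.filter fun w => w ≠ T.root ∧ T.parent w = x

/-- `S(v)`: the set of all children of nodes of a hypernode `v`. -/
def succs (T : FinRootedTree V) (v : Finset V) : Finset V :=
  v.biUnion T.children

/-- The set of nodes of the subtree rooted at `x` (the descendants of `x`,
including `x` itself). -/
def desc (T : FinRootedTree V) (x : V) : Finset V :=
  Finset.univ.filter fun w =>
    x ∈ (Finset.range (T.depth w + 1)).image fun k => T.parent^[k] w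

/-- `Cost(T_x)`: the total cost of the subtree rooted at `x`. -/
noncomputable def subtreeCost (T : FinRootedTree V) (c : V → ℝ) (x : V) : ℝ :=
  ∑ w ∈ T.desc x, c w

/-- `Cost(T_v)`: the total cost of the forest rooted at the hypernode `v`. -/
noncomputable def forestCost (T : FinRootedTree V) (c : V → ℝ) (v : Finset V) : ℝ :=
  ∑ x ∈ v, T.subtreeCost c x

/-- `H(v)`: the hyperchildren of `v` for budget `B`, i.e. the subsets of `S(v)`
of size `min B |S(v)|`. -/
def hyper (T : FinRootedTree V) (B : ℕ) (v : Finset V) : Finset (Finset V) :=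
  (T.succs v).powersetCard (min B (T.succs v).card)

/-- A hypernode: a nonempty set of distinct nodes, all at the same depth. -/
def IsHypernode (T : FinRootedTree V) (v : Finset V) : Prop :=
  v.Nonempty ∧ ∀ a ∈ v, ∀ b ∈ v, T.depth a = T.depth b

/-- Expectation functional of the SEP estimator `C_SEP(T_v)` (with selection
probabilities `P`): `sepE T c B P fuel v g` is `E[g(C_SEP(T_v))]`, defined by
the recursion of Algorithm 1, with enough fuel to reach the leaves. -/
noncomputable def sepE (T : FinRootedTree V) (c : V → ℝ) (B : ℕ)
    (P : Finset V → Finset V → ℝ) : ℕ → Finset V → (ℝ → ℝ) → ℝ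
  | 0, v, g => g ((∑ x ∈ v, c x) / (v.card : ℝ))
  | fuel + 1, v, g =>
      if T.succs v = ∅ then g ((∑ x ∈ v, c x) / (v.card : ℝ))
      else
        ∑ w ∈ T.hyper B v,
          P v w *
            sepE T c B P fuel w fun y =>
              g ((∑ x ∈ v, c x) / (v.card : ℝ) +
                (w.card : ℝ) * y /
                  ((v.card : ℝ) * ((((T.succs v).card - 1).choose (w.card - 1) : ℕ) : ℝ) *
                    P v w))

theorem _root_.Finset.sum_powersetCard_sum {α β : Type*} [Semiring β] [DecidableEq α]
    (s : Finset α) {k : ℕ} (hk : 1 ≤ k) (f : α → β) :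
    ∑ w ∈ s.powersetCard k, ∑ x ∈ w, f x = ((#s - 1).choose (k - 1) : β) * ∑ x ∈ s, f x := by
  rw [Finset.sum_comm' (t' := s) (s' := fun x => {w ∈ s.powersetCard k | {x} ⊆ w})
    (fun w x => by aesop), Finset.mul_sum]
  refine Finset.sum_congr rfl fun x hx => ?_
  rw [Finset.sum_const, nsmul_eq_mul, card_filter_powersetCard_subset _ _ _
    (Finset.singleton_subset_iff.2 hx) (by simpa using hk), Finset.card_singleton]

section Tree

variable (T : FinRootedTree V)

theorem depth_parent_eq (u : V) : T.depth (T.parent u) = T.depth u - 1 := by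
  by_cases hu : u = T.root
  · simp [hu, T.parent_root, T.depth_root]
  · have := T.depth_parent u hu
    omega

theorem depth_iterate_parent (k : ℕ) (u : V) : T.depth (T.parent^[k] u) = T.depth u - k := by
  induction k with
  | zero => rfl
  | succ k ih => rw [Function.iterate_succ_apply', depth_parent_eq, ih]; omega

theorem depth_lt_card (u : V) : T.depth u < Fintype.card V := by
  have hinj : Function.Injective fun k : Fin (T.depth u + 1) => T.parent^[k] u := by
    intro i j hij
    have := congrArg T.depth hij
    simp only [depth_iterate_parent] at this
    omega
  simpa using Fintype.card_le_of_injective _ hinj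

theorem mem_children {x y : V} : y ∈ T.children x ↔ y ≠ T.root ∧ T.parent y = x := by
  simp [children]

theorem depth_of_mem_children {x y : V} (h : y ∈ T.children x) :
    T.depth y = T.depth x + 1 := by
  rw [mem_children] at h
  have := T.depth_parent y h.1
  rw [h.2] at this
  omega

theorem exists_depth_eq_of_mem_succs {v : Finset V} {y : V} (hy : y ∈ T.succs v) :
    ∃ x ∈ v, T.depth y = T.depth x + 1 := by
  obtain ⟨x, hx, hxy⟩ := Finset.mem_biUnion.1 hy
  exact ⟨x, hx, T.depth_of_mem_children hxy⟩

theorem mem_desc {x w : V} :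
    w ∈ T.desc x ↔ ∃ k ≤ T.depth w, T.parent^[k] w = x := by
  simp [desc]

theorem depth_le_of_mem_desc {x w : V} (h : w ∈ T.desc x) : T.depth x ≤ T.depth w := by
  obtain ⟨k, -, rfl⟩ := (T.mem_desc).1 h
  rw [depth_iterate_parent]
  omega

theorem disjoint_desc_of_depth_eq {y z : V} (hyz : y ≠ z) (h : T.depth y = T.depth z) :
    Disjoint (T.desc y) (T.desc z) := by
  refine Finset.disjoint_left.2 fun w hy hz => hyz ?_
  obtain ⟨i, hi, rfl⟩ := (T.mem_desc).1 hy
  obtain ⟨j, hj, rfl⟩ := (T.mem_desc).1 hz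
  simp only [depth_iterate_parent] at h
  rw [show i = j by omega]

theorem desc_eq_insert_biUnion (x : V) :
    T.desc x = insert x ((T.children x).biUnion T.desc) := by
  ext w
  simp only [Finset.mem_insert, Finset.mem_biUnion, mem_desc, mem_children]
  constructor
  · rintro ⟨_ | j, hj, rfl⟩
    · exact .inl rfl
    · refine .inr ⟨T.parent^[j] w, ⟨fun h => ?_, (Function.iterate_succ_apply' ..).symm⟩,
        j, by omega, rfl⟩
      have := congrArg T.depth h
      rw [depth_iterate_parent, T.depth_root] at this
      omega
  · rintro (rfl | ⟨y, ⟨hy, rfl⟩, j, hj, rfl⟩)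
    · exact ⟨0, Nat.zero_le _, rfl⟩
    · refine ⟨j + 1, ?_, Function.iterate_succ_apply' ..⟩
      have := T.depth_parent _ hy
      rw [depth_parent_eq, depth_iterate_parent] at this
      omega

theorem subtreeCost_eq_add_sum_children (c : V → ℝ) (x : V) :
    T.subtreeCost c x = c x + ∑ y ∈ T.children x, T.subtreeCost c y := by
  have hdisj : (T.children x : Set V).PairwiseDisjoint T.desc := fun y hy z hz hyz =>
    T.disjoint_desc_of_depth_eq hyz
      (by rw [T.depth_of_mem_children hy, T.depth_of_mem_children hz])
  have hx : x ∉ (T.children x).biUnion T.desc := by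
    simp only [Finset.mem_biUnion, not_exists, not_and]
    intro y hy hxy
    have := T.depth_le_of_mem_desc hxy
    rw [T.depth_of_mem_children hy] at this
    omega
  rw [subtreeCost, desc_eq_insert_biUnion, Finset.sum_insert hx, Finset.sum_biUnion hdisj]
  rfl

theorem forestCost_eq_add_forestCost_succs (c : V → ℝ) (v : Finset V) :
    T.forestCost c v = ∑ x ∈ v, c x + T.forestCost c (T.succs v) := by
  have hdisj : (v : Set V).PairwiseDisjoint T.children := fun x _ x' _ hxx' =>
    Finset.disjoint_left.2 fun y hy hy' =>
      hxx' (((T.mem_children).1 hy).2.symm.trans ((T.mem_children).1 hy').2)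
  rw [forestCost, succs, forestCost, Finset.sum_biUnion hdisj, ← Finset.sum_add_distrib]
  exact Finset.sum_congr rfl fun x _ => T.subtreeCost_eq_add_sum_children c x

theorem forestCost_of_succs_eq_empty (c : V → ℝ) {v : Finset V} (hS : T.succs v = ∅) :
    T.forestCost c v = ∑ x ∈ v, c x := by
  rw [T.forestCost_eq_add_forestCost_succs c v, hS, forestCost, Finset.sum_empty, add_zero]

theorem sum_hyper_forestCost (c : V → ℝ) {B : ℕ} (hB : 1 ≤ B) {v : Finset V}
    (hS : (T.succs v).Nonempty) :
    ∑ w ∈ T.hyper B v, T.forestCost c w =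
      (((#(T.succs v) - 1).choose (min B #(T.succs v) - 1) : ℕ) : ℝ) *
        T.forestCost c (T.succs v) := by
  exact_mod_cast Finset.sum_powersetCard_sum _ (le_min hB hS.card_pos) _

theorem sum_prob_hyper_eq_one (c : V → ℝ) (hpos : ∀ x : V, 0 < T.subtreeCost c x)
    {B : ℕ} (hB : 1 ≤ B) {P : Finset V → Finset V → ℝ}
    (hP : ∀ u w : Finset V, P u w = T.forestCost c w / ∑ x ∈ T.hyper B u, T.forestCost c x)
    {v : Finset V} (hS : (T.succs v).Nonempty) :
    ∑ w ∈ T.hyper B v, P v w = 1 := by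
  have hC : 0 < (((#(T.succs v) - 1).choose (min B #(T.succs v) - 1) : ℕ) : ℝ) :=
    Nat.cast_pos.2 (Nat.choose_pos (by omega))
  have hFS : 0 < T.forestCost c (T.succs v) := Finset.sum_pos (fun x _ => hpos x) hS
  simp_rw [hP v, ← Finset.sum_div, T.sum_hyper_forestCost c hB hS]
  exact div_self (by positivity)

/-- The update step of `sepE`, fed the exact value `Cost(T_w) / |w|` of the drawn hyperchild,
returns `Cost(T_v) / |v|`: the weight `1 / P v w` cancels `Cost(T_w)`. -/
theorem sum_div_card_add_eq_forestCost_div_card (c : V → ℝ)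
    (hpos : ∀ x : V, 0 < T.subtreeCost c x) {B : ℕ} (hB : 1 ≤ B) {P : Finset V → Finset V → ℝ}
    (hP : ∀ u w : Finset V, P u w = T.forestCost c w / ∑ x ∈ T.hyper B u, T.forestCost c x)
    {v w : Finset V} (hS : (T.succs v).Nonempty) (hw : w ∈ T.hyper B v) :
    (∑ x ∈ v, c x) / #v + #w * (T.forestCost c w / #w) /
        (#v * (((#(T.succs v) - 1).choose (#w - 1) : ℕ) : ℝ) * P v w) =
      T.forestCost c v / #v := by
  obtain ⟨-, hwcard⟩ := Finset.mem_powersetCard.1 hw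
  have hwne : w.Nonempty := Finset.card_pos.1 (hwcard ▸ le_min hB hS.card_pos)
  have hFw : 0 < T.forestCost c w := Finset.sum_pos (fun x _ => hpos x) hwne
  have hFS : 0 < T.forestCost c (T.succs v) := Finset.sum_pos (fun x _ => hpos x) hS
  have hC : 0 < (((#(T.succs v) - 1).choose (min B #(T.succs v) - 1) : ℕ) : ℝ) :=
    Nat.cast_pos.2 (Nat.choose_pos (by omega))
  have hw0 : (#w : ℝ) ≠ 0 := by positivity
  rw [hP v w, T.sum_hyper_forestCost c hB hS, hwcard, T.forestCost_eq_add_forestCost_succs c v]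
  field_simp

theorem sepE_eq_of_depth_le (c : V → ℝ) (hpos : ∀ x : V, 0 < T.subtreeCost c x)
    {B : ℕ} (hB : 1 ≤ B) {P : Finset V → Finset V → ℝ}
    (hP : ∀ u w : Finset V, P u w = T.forestCost c w / ∑ x ∈ T.hyper B u, T.forestCost c x)
    (fuel : ℕ) (v : Finset V) (hdepth : ∀ x ∈ v, ∀ y : V, T.depth y ≤ T.depth x + fuel)
    (g : ℝ → ℝ) : sepE T c B P fuel v g = g (T.forestCost c v / #v) := by
  induction fuel generalizing v g with
  | zero =>
    have hS : T.succs v = ∅ := Finset.eq_empty_of_forall_notMem fun y hy => by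
      obtain ⟨x, hx, hxy⟩ := T.exists_depth_eq_of_mem_succs hy
      have := hdepth x hx y
      omega
    rw [sepE, T.forestCost_of_succs_eq_empty c hS]
  | succ fuel ih =>
    by_cases hS : T.succs v = ∅
    · rw [sepE, if_pos hS, T.forestCost_of_succs_eq_empty c hS]
    have hSne := Finset.nonempty_of_ne_empty hS
    have hdepth_hyper : ∀ w ∈ T.hyper B v, ∀ z ∈ w, ∀ y : V, T.depth y ≤ T.depth z + fuel := by
      intro w hw z hz y
      obtain ⟨x, hx, hxz⟩ :=
        T.exists_depth_eq_of_mem_succs ((Finset.mem_powersetCard.1 hw).1 hz)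
      have := hdepth x hx y
      omega
    calc sepE T c B P (fuel + 1) v g
        = ∑ w ∈ T.hyper B v, P v w * g (T.forestCost c v / #v) := by
          rw [sepE, if_neg hS]
          refine Finset.sum_congr rfl fun w hw => ?_
          rw [ih w (hdepth_hyper w hw),
            T.sum_div_card_add_eq_forestCost_div_card c hpos hB hP hSne hw]
      _ = g (T.forestCost c v / #v) := by
          rw [← Finset.sum_mul, T.sum_prob_hyper_eq_one c hpos hB hP hSne, one_mul]

end Tree

theorem sep_zero_variance_general (T : FinRootedTree V) (c : V → ℝ)
    (hpos : ∀ x : V, 0 < T.subtreeCost c x)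
    (B : ℕ) (hB : 1 ≤ B) (P : Finset V → Finset V → ℝ)
    (hP : ∀ u w : Finset V,
      P u w = T.forestCost c w / ∑ x ∈ T.hyper B u, T.forestCost c x)
    (v : Finset V) (g : ℝ → ℝ) :
    sepE T c B P (Fintype.card V) v g = g (T.forestCost c v / (v.card : ℝ)) :=
  T.sepE_eq_of_depth_le c hpos hB hP _ v
    (fun _ _ y => (T.depth_lt_card y).le.trans (Nat.le_add_left _ _)) g

/-- Paper's Theorem 2: if each hypernode `w` is chosen from `H(v)` with
probability proportional to `Cost(T_w)`, then `C_SEP` is a zero-variance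
estimator: with probability one, `C_SEP(T_v) = Cost(T_v)/|v|` (i.e. the
distribution of `C_SEP(T_v)` is the point mass at `Cost(T_v)/|v|`, so
`E[g(C_SEP(T_v))] = g(Cost(T_v)/|v|)` for every `g`). -/
theorem sep_zero_variance (T : FinRootedTree V) (c : V → ℝ) (hc : ∀ x, 0 ≤ c x)
    (hpos : ∀ x : V, 0 < T.subtreeCost c x)
    (B : ℕ) (hB : 1 ≤ B) (P : Finset V → Finset V → ℝ)
    (hP : ∀ u w : Finset V,
      P u w = T.forestCost c w / ∑ x ∈ T.hyper B u, T.forestCost c x)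
    (v : Finset V) (hv : T.IsHypernode v) (g : ℝ → ℝ) :
    sepE T c B P (Fintype.card V) v g = g (T.forestCost c v / (v.card : ℝ)) :=
  sep_zero_variance_general T c hpos B hB P hP v g

end FinRootedTree
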